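/- Let K be an algebraically closed field of characteristic zero and let V, W be finite-dimensional K[x,y]-modules with associated Lie algebras L_V = K⟨P,Q⟩ ⋉ V and L_W = K⟨S,T⟩ ⋉ W. Suppose there exists a Lie algebra isomorphism φ: L_V → L_W such that φ(K⟨P,Q⟩) + W = L_W. Then the K[x,y]-modules V and W are weakly isomorphic. -/
import Mathlib


/-- The bracket of the semidirect product `L_V = K⟨P,Q⟩ ⋉ V` on `(K × K) × V`. -/
def lieBk {K V : Type*} [Field K] [AddCommGroup V] [Module K V]
    (P Q : V →ₗ[K] V) (a b : (K × K) × V) : (K × K) × V :=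
  (0, (a.1.1 • P + a.1.2 • Q) b.2 - (b.1.1 • P + b.1.2 • Q) a.2)

/-- The abelian ideal `{0} ⊕ V` of `L_V`. -/
def vEmb (K V : Type*) [Field K] [AddCommGroup V] [Module K V] :
    Submodule K ((K × K) × V) :=
  (⊥ : Submodule K (K × K)).prod (⊤ : Submodule K V)

/-- The subalgebra `K⟨P,Q⟩ = K² ⊕ {0}` of `L_V`. -/
def pqEmb (K V : Type*) [Field K] [AddCommGroup V] [Module K V] :
    Submodule K ((K × K) × V) :=
  (⊤ : Submodule K (K × K)).prod (⊥ : Submodule K V)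

/-- Weak isomorphism of the `K[x,y]`-modules given by operator pairs `(P,Q)` and
`(S,T)`: some twist of `(S,T)` by an invertible 2×2 matrix is isomorphic to `(P,Q)`. -/
def WeakIso {K V W : Type*} [Field K] [AddCommGroup V] [Module K V]
    [AddCommGroup W] [Module K W] (P Q : V →ₗ[K] V) (S T : W →ₗ[K] W) : Prop :=
  ∃ M : Matrix (Fin 2) (Fin 2) K, IsUnit M ∧ ∃ e : V ≃ₗ[K] W,
    ∀ v, e (P v) = (M 0 0 • S + M 0 1 • T) (e v) ∧
         e (Q v) = (M 1 0 • S + M 1 1 • T) (e v)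

/-- Any linear map out of `K × K` is determined by its values at `(1,0)` and `(0,1)`. -/
lemma aux_pair {K : Type*} [Field K] {M : Type*} [AddCommGroup M] [Module K M]
    (f : (K × K) →ₗ[K] M) (c : K × K) :
    f c = c.1 • f (1, 0) + c.2 • f (0, 1) := by
  have hc : c = c.1 • ((1:K), (0:K)) + c.2 • ((0:K), (1:K)) := by
    ext <;> simp
  conv_lhs => rw [hc]
  rw [map_add, map_smul, map_smul]

/-- Lemma 3: if a Lie algebra isomorphism φ : L_V → L_W satisfies
φ(K⟨P,Q⟩) + W = L_W, then V and W are weakly isomorphic. -/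
theorem stmt_13 {K V W : Type*} [Field K] [IsAlgClosed K] [CharZero K]
    [AddCommGroup V] [Module K V] [AddCommGroup W] [Module K W]
    [FiniteDimensional K V] [FiniteDimensional K W]
    (P Q : V →ₗ[K] V) (S T : W →ₗ[K] W)
    (hPQ : ∀ v, P (Q v) = Q (P v)) (hST : ∀ w, S (T w) = T (S w))
    (φ : ((K × K) × V) ≃ₗ[K] ((K × K) × W))
    (hφ : ∀ a b, φ (lieBk P Q a b) = lieBk S T (φ a) (φ b))
    (hsum : (pqEmb K V).map (φ : ((K × K) × V) →ₗ[K] (K × K) × W) ⊔ vEmb K W = ⊤) :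
    WeakIso P Q S T := by
  classical
  -- block components of φ
  set fA : (K × K) →ₗ[K] (K × K) :=
    (LinearMap.fst K (K × K) W) ∘ₗ (φ.toLinearMap ∘ₗ LinearMap.inl K (K × K) V) with hfAdef
  set fB : V →ₗ[K] (K × K) :=
    (LinearMap.fst K (K × K) W) ∘ₗ (φ.toLinearMap ∘ₗ LinearMap.inr K (K × K) V) with hfBdef
  set fC : (K × K) →ₗ[K] W :=
    (LinearMap.snd K (K × K) W) ∘ₗ (φ.toLinearMap ∘ₗ LinearMap.inl K (K × K) V) with hfCdef
  set fD : V →ₗ[K] W :=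
    (LinearMap.snd K (K × K) W) ∘ₗ (φ.toLinearMap ∘ₗ LinearMap.inr K (K × K) V) with hfDdef
  have hdec : ∀ (a : K × K) (v : V), φ (a, v) = (fA a + fB v, fC a + fD v) := by
    intro a v
    have h : ((a, v) : (K × K) × V) = (a, 0) + (0, v) := by simp
    rw [h, map_add]
    rfl
  -- key bracket relations
  have hrelB : ∀ (a : K × K) (v : V), fB ((a.1 • P + a.2 • Q) v) = 0 := by
    intro a v
    have h := hφ (a, 0) ((0 : K × K), v)
    simp only [lieBk] at h
    rw [hdec a 0, hdec 0 v] at h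
    simp only [map_zero, add_zero, zero_add, LinearMap.add_apply, LinearMap.smul_apply,
      LinearMap.zero_apply, zero_smul, sub_zero] at h
    have h1 := congrArg Prod.fst h
    rw [hdec 0 _] at h1
    simpa using h1
  have hrelD : ∀ (a : K × K) (v : V),
      fD ((a.1 • P + a.2 • Q) v)
        = ((fA a).1 • S + (fA a).2 • T) (fD v) - ((fB v).1 • S + (fB v).2 • T) (fC a) := by
    intro a v
    have h := hφ (a, 0) ((0 : K × K), v)
    simp only [lieBk] at h
    rw [hdec a 0, hdec 0 v] at h
    simp only [map_zero, add_zero, zero_add, LinearMap.add_apply, LinearMap.smul_apply,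
      LinearMap.zero_apply, zero_smul, sub_zero] at h
    have h2 := congrArg Prod.snd h
    rw [hdec 0 _] at h2
    simpa using h2
  have hrel2 : ∀ (a b : K × K),
      ((fA a).1 • S + (fA a).2 • T) (fC b) = ((fA b).1 • S + (fA b).2 • T) (fC a) := by
    intro a b
    have h := hφ (a, 0) (b, (0 : V))
    simp only [lieBk] at h
    rw [hdec a 0, hdec b 0] at h
    simp only [map_zero, add_zero, zero_add, sub_zero] at h
    have h0 : φ ((0 : K × K), (0 : V)) = 0 := by
      simpa using (map_zero φ)
    rw [h0] at h
    have h2 := congrArg Prod.snd h.symm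
    simp only at h2
    exact sub_eq_zero.mp h2
  -- fA is bijective
  have hAsurj : Function.Surjective fA := by
    intro c
    have hmem : ((c, (0 : W)) : (K × K) × W) ∈
        (pqEmb K V).map (φ : ((K × K) × V) →ₗ[K] (K × K) × W) ⊔ vEmb K W := by
      rw [hsum]; trivial
    rcases Submodule.mem_sup.mp hmem with ⟨y, hy, z, hz, hyz⟩
    rcases hy with ⟨x, hx, rfl⟩
    have hx2 : x.2 = 0 := by
      have := hx.2
      simpa [pqEmb] using (Submodule.mem_prod.mp hx).2
    have hz1 : z.1 = 0 := by
      simpa [vEmb] using (Submodule.mem_prod.mp hz).1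
    refine ⟨x.1, ?_⟩
    have hφx : (φ : ((K × K) × V) →ₗ[K] (K × K) × W) x
        = (fA x.1 + fB x.2, fC x.1 + fD x.2) := hdec x.1 x.2
    rw [hφx, hx2, map_zero, add_zero] at hyz
    have h1 := congrArg Prod.fst hyz
    simpa [hz1] using h1
  have hAbij : Function.Bijective fA :=
    ⟨(LinearMap.injective_iff_surjective).mpr hAsurj, hAsurj⟩
  set eA : (K × K) ≃ₗ[K] (K × K) := LinearEquiv.ofBijective fA hAbij with heAdef
  have heA : ∀ c, eA c = fA c := fun c => rfl
  set fA' : (K × K) →ₗ[K] (K × K) := (eA.symm : (K × K) ≃ₗ[K] (K × K)).toLinearMap with hfA'def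
  have hA'A : ∀ c, fA' (fA c) = c := by
    intro c
    show eA.symm (fA c) = c
    rw [← heA c]; exact eA.symm_apply_apply c
  have hAA' : ∀ c, fA (fA' c) = c := by
    intro c
    show fA (eA.symm c) = c
    rw [← heA (eA.symm c)]; exact eA.apply_symm_apply c
  -- the Schur complement
  set fE : V →ₗ[K] W := fD - fC ∘ₗ fA' ∘ₗ fB with hfEdef
  have hfE : ∀ v, fE v = fD v - fC (fA' (fB v)) := fun v => rfl
  have hEinj : Function.Injective fE := by
    rw [← LinearMap.ker_eq_bot, LinearMap.ker_eq_bot']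
    intro v hv
    have hφ0 : φ (-(fA' (fB v)), v) = 0 := by
      rw [hdec]
      have h1 : fA (-(fA' (fB v))) + fB v = 0 := by
        rw [map_neg, hAA']; exact neg_add_cancel _
      have h2 : fC (-(fA' (fB v))) + fD v = 0 := by
        rw [map_neg]
        have hDC : fD v = fC (fA' (fB v)) := sub_eq_zero.mp ((hfE v).symm.trans hv)
        rw [hDC]; exact neg_add_cancel _
      rw [h1, h2]; rfl
    have h3 : ((-(fA' (fB v)), v) : (K × K) × V) = 0 := by
      apply φ.injective
      rw [hφ0, map_zero]
    simpa using congrArg Prod.snd h3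
  have hEsurj : Function.Surjective fE := by
    intro w
    obtain ⟨p, hp⟩ := φ.surjective ((0 : K × K), w)
    refine ⟨p.2, ?_⟩
    have hp' : φ (p.1, p.2) = ((0 : K × K), w) := by rw [← hp]
    rw [hdec] at hp'
    rw [Prod.ext_iff] at hp'
    obtain ⟨h1, h2⟩ := hp'
    simp only at h1 h2
    have h3 : fB p.2 = fA (-p.1) := by rw [map_neg]; linear_combination h1
    rw [hfE, h3, hA'A, map_neg]
    rw [← h2]; abel
  -- intertwining relations
  have hkey : ∀ (a : K × K) (v : V),
      fE ((a.1 • P + a.2 • Q) v) = ((fA a).1 • S + (fA a).2 • T) (fE v) := by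
    intro a v
    have h4 : ((fA a).1 • S + (fA a).2 • T) (fC (fA' (fB v)))
        = ((fB v).1 • S + (fB v).2 • T) (fC a) := by
      have := hrel2 a (fA' (fB v))
      rwa [hAA'] at this
    rw [hfE, hrelB, map_zero, map_zero, sub_zero, hrelD, hfE v, map_sub, h4]
  -- the matrix
  set M : Matrix (Fin 2) (Fin 2) K :=
    !![(fA (1, 0)).1, (fA (1, 0)).2; (fA (0, 1)).1, (fA (0, 1)).2] with hMdef
  set N : Matrix (Fin 2) (Fin 2) K :=
    !![(fA' (1, 0)).1, (fA' (1, 0)).2; (fA' (0, 1)).1, (fA' (0, 1)).2] with hNdef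
  have hc1 : ∀ (f : (K × K) →ₗ[K] (K × K)) (c : K × K),
      (f c).1 = c.1 * (f (1,0)).1 + c.2 * (f (0,1)).1 := by
    intro f c
    have := congrArg Prod.fst (aux_pair f c)
    simpa using this
  have hc2 : ∀ (f : (K × K) →ₗ[K] (K × K)) (c : K × K),
      (f c).2 = c.1 * (f (1,0)).2 + c.2 * (f (0,1)).2 := by
    intro f c
    have := congrArg Prod.snd (aux_pair f c)
    simpa using this
  have hMN : M * N = 1 := by
    have e00 : (fA (1,0)).1 * (fA' (1,0)).1 + (fA (1,0)).2 * (fA' (0,1)).1 = 1 := by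
      have := hc1 fA' (fA (1,0)); rw [hA'A] at this; simpa using this.symm
    have e01 : (fA (1,0)).1 * (fA' (1,0)).2 + (fA (1,0)).2 * (fA' (0,1)).2 = 0 := by
      have := hc2 fA' (fA (1,0)); rw [hA'A] at this; simpa using this.symm
    have e10 : (fA (0,1)).1 * (fA' (1,0)).1 + (fA (0,1)).2 * (fA' (0,1)).1 = 0 := by
      have := hc1 fA' (fA (0,1)); rw [hA'A] at this; simpa using this.symm
    have e11 : (fA (0,1)).1 * (fA' (1,0)).2 + (fA (0,1)).2 * (fA' (0,1)).2 = 1 := by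
      have := hc2 fA' (fA (0,1)); rw [hA'A] at this; simpa using this.symm
    rw [hMdef, hNdef, Matrix.mul_fin_two, Matrix.one_fin_two, e00, e01, e10, e11]
  have hNM : N * M = 1 := by
    have e00 : (fA' (1,0)).1 * (fA (1,0)).1 + (fA' (1,0)).2 * (fA (0,1)).1 = 1 := by
      have := hc1 fA (fA' (1,0)); rw [hAA'] at this; simpa using this.symm
    have e01 : (fA' (1,0)).1 * (fA (1,0)).2 + (fA' (1,0)).2 * (fA (0,1)).2 = 0 := by
      have := hc2 fA (fA' (1,0)); rw [hAA'] at this; simpa using this.symm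
    have e10 : (fA' (0,1)).1 * (fA (1,0)).1 + (fA' (0,1)).2 * (fA (0,1)).1 = 0 := by
      have := hc1 fA (fA' (0,1)); rw [hAA'] at this; simpa using this.symm
    have e11 : (fA' (0,1)).1 * (fA (1,0)).2 + (fA' (0,1)).2 * (fA (0,1)).2 = 1 := by
      have := hc2 fA (fA' (0,1)); rw [hAA'] at this; simpa using this.symm
    rw [hNdef, hMdef, Matrix.mul_fin_two, Matrix.one_fin_two, e00, e01, e10, e11]
  have hMunit : IsUnit M := ⟨⟨M, N, hMN, hNM⟩, rfl⟩
  refine ⟨M, hMunit, LinearEquiv.ofBijective fE ⟨hEinj, hEsurj⟩, ?_⟩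
  intro v
  constructor
  · have := hkey (1, 0) v
    simp only [one_smul, zero_smul, add_zero, LinearMap.add_apply] at this
    show fE (P v) = (M 0 0 • S + M 0 1 • T) (fE v)
    have hM00 : M 0 0 = (fA (1,0)).1 := by simp [hMdef]
    have hM01 : M 0 1 = (fA (1,0)).2 := by simp [hMdef]
    rw [hM00, hM01]
    simpa using this
  · have := hkey (0, 1) v
    simp only [one_smul, zero_smul, zero_add, LinearMap.add_apply] at this
    show fE (Q v) = (M 1 0 • S + M 1 1 • T) (fE v)
    have hM10 : M 1 0 = (fA (0,1)).1 := by simp [hMdef]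
    have hM11 : M 1 1 = (fA (0,1)).2 := by simp [hMdef]
    rw [hM10, hM11]
    simpa using this
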